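/- arXiv:2311.16148 — 2 statements merged into one kernel-verified Lean document; each statement's English description precedes it below -/
import Mathlib

section
/- Let c₁ ≠ c₂ be real numbers and σ₁, σ₂ > 0. Then the map h : ℝ → ℝ² defined by h(u) = (exp(-(u - c₁)²/(2σ₁²)), exp(-(u - c₂)²/(2σ₂²))) is injective. -/
/-!
A Gaussian kernel centred at `c` only identifies points that are mirror images of each other
about `c`. Two distinct points identified by both kernels would therefore have the midpoint
`c₁` and the midpoint `c₂`, which is impossible when `c₁ ≠ c₂`.
-/

noncomputable def gaussianKernel (c σ u : ℝ) : ℝ :=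
  Real.exp (-(u - c) ^ 2 / (2 * σ ^ 2))

theorem sq_sub_eq_sq_sub_iff {c u v : ℝ} :
    (u - c) ^ 2 = (v - c) ^ 2 ↔ u = v ∨ u + v = 2 * c := by
  rw [sq_eq_sq_iff_eq_or_eq_neg]
  constructor <;> rintro (h | h) <;> [left; right; left; right] <;> linarith

theorem gaussianKernel_eq_gaussianKernel_iff {c σ u v : ℝ} (hσ : σ ≠ 0) :
    gaussianKernel c σ u = gaussianKernel c σ v ↔ u = v ∨ u + v = 2 * c := by
  have hσ2 : 2 * σ ^ 2 ≠ 0 := by positivity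
  rw [gaussianKernel, gaussianKernel, Real.exp_eq_exp, div_left_inj' hσ2, neg_inj,
    sq_sub_eq_sq_sub_iff]

theorem urbf_two_kernel_injective (c₁ c₂ σ₁ σ₂ : ℝ) (hc : c₁ ≠ c₂)
    (hσ₁ : 0 < σ₁) (hσ₂ : 0 < σ₂) :
    Function.Injective (fun u : ℝ =>
      (Real.exp (-(u - c₁) ^ 2 / (2 * σ₁ ^ 2)),
       Real.exp (-(u - c₂) ^ 2 / (2 * σ₂ ^ 2)))) := by
  intro u v huv
  obtain ⟨h₁, h₂⟩ := Prod.mk.inj huv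
  rcases (gaussianKernel_eq_gaussianKernel_iff hσ₁.ne').1 h₁ with h | hmid₁
  · exact h
  rcases (gaussianKernel_eq_gaussianKernel_iff hσ₂.ne').1 h₂ with h | hmid₂
  · exact h
  exact absurd (by linarith) hc
end

section
/- Fix D ≥ 1 and, for each coordinate d, two kernels with distinct centers c_{d,1} ≠ c_{d,2} and spreads σ_{d,1}, σ_{d,2} > 0. Define H : ℝ^D → ℝ^{2D} by H(x)_{(d,k)} = exp(-(x_d - c_{d,k})²/(2σ_{d,k}²)). Then for any N distinct points x₁, …, x_N ∈ ℝ^D and any function values y₁, …, y_N ∈ ℝ, there exists a function f : ℝ^{2D} → ℝ of the form f(z) = ∑_{q=1}^N β_q ψ(A_q(z)) (with ψ achieving 0 and 1, A_q affine, β_q ∈ ℝ) such that f(H(xₙ)) = yₙ for all n — assuming the finite interpolation theorem for single-hidden-layer networks holds. -/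
/-! A network on the features `H x` is a network on `x` as soon as `H` is injective, and `H` is:
for each coordinate, the two Gaussian values determine the squared distances `(x_d - c_{d,k})²`
to two distinct centers, and these pin down `x_d`. -/

open Real

lemma sq_sub_eq_of_gaussian_eq {u v c σ : ℝ} (hσ : σ ≠ 0)
    (h : exp (-(u - c) ^ 2 / (2 * σ ^ 2)) = exp (-(v - c) ^ 2 / (2 * σ ^ 2))) :
    (u - c) ^ 2 = (v - c) ^ 2 := by
  have hden : 2 * σ ^ 2 ≠ 0 := by positivity
  have := exp_injective h
  rwa [div_left_inj' hden, neg_inj] at this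

lemma eq_of_sq_sub_eq_of_sq_sub_eq {u v c₀ c₁ : ℝ} (hc : c₀ ≠ c₁)
    (h₀ : (u - c₀) ^ 2 = (v - c₀) ^ 2) (h₁ : (u - c₁) ^ 2 = (v - c₁) ^ 2) : u = v := by
  have : (u - v) * (c₀ - c₁) = 0 := by linear_combination (h₁ - h₀) / 2
  rcases mul_eq_zero.mp this with h | h
  · exact sub_eq_zero.mp h
  · exact absurd (sub_eq_zero.mp h) hc

lemma injective_of_gaussian_features {ι : Type*} (c σ : ι → Fin 2 → ℝ)
    (hc : ∀ d, c d 0 ≠ c d 1) (hσ : ∀ d k, σ d k ≠ 0)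
    (H : (ι → ℝ) → (ι × Fin 2 → ℝ))
    (hH : ∀ x dk, H x dk = exp (-(x dk.1 - c dk.1 dk.2) ^ 2 / (2 * (σ dk.1 dk.2) ^ 2))) :
    Function.Injective H := by
  intro u v huv
  funext d
  have hsq (k : Fin 2) : (u d - c d k) ^ 2 = (v d - c d k) ^ 2 := by
    have := congrFun huv (d, k)
    rw [hH, hH] at this
    exact sq_sub_eq_of_gaussian_eq (hσ d k) this
  exact eq_of_sq_sub_eq_of_sq_sub_eq (hc d) (hsq 0) (hsq 1)

theorem urbf_universal_interpolation_general (D : ℕ)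
    (c σ : Fin D → Fin 2 → ℝ)
    (hc : ∀ d, c d 0 ≠ c d 1) (hσ : ∀ d k, 0 < σ d k)
    (H : (Fin D → ℝ) → (Fin D × Fin 2 → ℝ))
    (hH : ∀ x dk, H x dk = Real.exp (-(x dk.1 - c dk.1 dk.2) ^ 2 / (2 * (σ dk.1 dk.2) ^ 2)))
    (N : ℕ)
    (hinterp : ∀ z : Fin N → (Fin D × Fin 2 → ℝ), Function.Injective z →
      ∀ y : Fin N → ℝ,
        ∃ (ψ : ℝ → ℝ) (a b : ℝ) (β : Fin N → ℝ)
          (w : Fin N → (Fin D × Fin 2 → ℝ)) (bias : Fin N → ℝ),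
          ψ a = 0 ∧ ψ b = 1 ∧
          ∀ n, ∑ q : Fin N, β q * ψ ((∑ j, w q j * z n j) + bias q) = y n)
    (x : Fin N → (Fin D → ℝ)) (hx : Function.Injective x) (y : Fin N → ℝ) :
    ∃ (ψ : ℝ → ℝ) (a b : ℝ) (β : Fin N → ℝ)
      (w : Fin N → (Fin D × Fin 2 → ℝ)) (bias : Fin N → ℝ),
      ψ a = 0 ∧ ψ b = 1 ∧
      ∀ n, ∑ q : Fin N, β q * ψ ((∑ j, w q j * H (x n) j) + bias q) = y n :=
  have hH_inj := injective_of_gaussian_features c σ hc (fun d k => (hσ d k).ne') H hH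
  hinterp (H ∘ x) (hH_inj.comp hx) y

theorem urbf_universal_interpolation (D : ℕ) (hD : 1 ≤ D)
    (c σ : Fin D → Fin 2 → ℝ)
    (hc : ∀ d, c d 0 ≠ c d 1) (hσ : ∀ d k, 0 < σ d k)
    (H : (Fin D → ℝ) → (Fin D × Fin 2 → ℝ))
    (hH : ∀ x dk, H x dk = Real.exp (-(x dk.1 - c dk.1 dk.2) ^ 2 / (2 * (σ dk.1 dk.2) ^ 2)))
    (N : ℕ)
    (hinterp : ∀ z : Fin N → (Fin D × Fin 2 → ℝ), Function.Injective z →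
      ∀ y : Fin N → ℝ,
        ∃ (ψ : ℝ → ℝ) (a b : ℝ) (β : Fin N → ℝ)
          (w : Fin N → (Fin D × Fin 2 → ℝ)) (bias : Fin N → ℝ),
          ψ a = 0 ∧ ψ b = 1 ∧
          ∀ n, ∑ q : Fin N, β q * ψ ((∑ j, w q j * z n j) + bias q) = y n)
    (x : Fin N → (Fin D → ℝ)) (hx : Function.Injective x) (y : Fin N → ℝ) :
    ∃ (ψ : ℝ → ℝ) (a b : ℝ) (β : Fin N → ℝ)
      (w : Fin N → (Fin D × Fin 2 → ℝ)) (bias : Fin N → ℝ),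
      ψ a = 0 ∧ ψ b = 1 ∧
      ∀ n, ∑ q : Fin N, β q * ψ ((∑ j, w q j * H (x n) j) + bias q) = y n :=
  urbf_universal_interpolation_general D c σ hc hσ H hH N hinterp x hx y
end
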